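/- Assume the Setup (Notation 7.1) with G a finite group, let p = [G : P] and q = [G : Q], and let (Z_j)_{j ∈ J} be a finite family of subsets of E. Define ‖X‖ = Σ_{j ∈ J} Σ_{g ∈ G} |X|*_{g • Z_j} for X ⊆ E. Then p·‖α ∩ β‖ + q·‖β ∪ Q • α‖ ≤ p·‖α‖ + q·‖β‖. -/

import Mathlib

open Pointwise

open scoped Classical

/-- `sep X Z` is the indicator `|X|*_Z`: it is `1` if `X` separates `Z`
(i.e. `Z` meets both `X` and its complement) and `0` otherwise. -/
noncomputable def sep {E : Type*} (X Z : Set E) : ℕ :=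
  if (Z ∩ X).Nonempty ∧ (Z ∩ Xᶜ).Nonempty then 1 else 0

/-!
The norm is invariant under translation, so `|Q| ‖X‖ = Σ_{k ∈ Q} ‖k X‖`, and after expanding the
norm it suffices to prove, for every single test set `W`,
`Σ_{k ∈ Q} |kα ∩ β|*_W + |P| |β ∪ Qα|*_W ≤ Σ_{k ∈ Q} |kα|*_W + |P| |β|*_W`
and multiply by `p`, as `p |P| = |G| = q |Q|`. The translates `kα` (`k ∈ Q`) are pairwise equal or
disjoint, each occurring `|P|` times. Those containing `W` all coincide, and they separate `W`
after intersecting with `β` only if `β` separates `W`: this is paid for by `|P| |β|*_W`. The others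
satisfy `|kα ∩ β|*_W ≤ |kα|*_W`. If `W` separates `β ∪ Qα`, then it lies in no translate, and the
extra `|P|` on the left is paid for by `|β|*_W` when `W` meets `β`, and otherwise by the `|P|`
copies of a translate that `W` meets, while then no `kα ∩ β` separates `W`.
-/

section Separation

variable {E : Type*}

theorem sep_eq_one_iff {X W : Set E} :
    sep X W = 1 ↔ (W ∩ X).Nonempty ∧ (W ∩ Xᶜ).Nonempty := by
  unfold sep; split_ifs with h <;> simp [h]

theorem sep_eq_zero_or_eq_one (X W : Set E) : sep X W = 0 ∨ sep X W = 1 := by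
  unfold sep; split_ifs <;> simp

theorem sep_le_sep {X Y W : Set E}
    (h : (W ∩ X).Nonempty ∧ (W ∩ Xᶜ).Nonempty → (W ∩ Y).Nonempty ∧ (W ∩ Yᶜ).Nonempty) :
    sep X W ≤ sep Y W := by
  unfold sep; split_ifs <;> simp_all

theorem sep_inter_le_left_of_not_subset {A B W : Set E} (hW : ¬ W ⊆ A) :
    sep (A ∩ B) W ≤ sep A W :=
  sep_le_sep fun ⟨⟨z, hzW, hzA, _⟩, _⟩ ↦ ⟨⟨z, hzW, hzA⟩, Set.not_subset.1 hW⟩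

theorem sep_inter_le_right_of_subset {A B W : Set E} (hW : W ⊆ A) :
    sep (A ∩ B) W ≤ sep B W :=
  sep_le_sep fun ⟨⟨z, hzW, _, hzB⟩, ⟨y, hyW, hy⟩⟩ ↦
    ⟨⟨z, hzW, hzB⟩, ⟨y, hyW, fun hyB ↦ hy ⟨hW hyW, hyB⟩⟩⟩

theorem sep_eq_zero_of_inter_right {A B W : Set E} (hWB : ¬ (W ∩ B).Nonempty) :
    sep (A ∩ B) W = 0 :=
  if_neg fun ⟨⟨z, hzW, _, hzB⟩, _⟩ ↦ hWB ⟨z, hzW, hzB⟩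

variable {ι : Type*} [Fintype ι] {A : ι → Set E} {m : ℕ}

theorem card_filter_subset_le (hdisj : ∀ i j, (A i ∩ A j).Nonempty → A i = A j)
    (hm : ∀ i, (Finset.univ.filter fun j ↦ A j = A i).card = m) {W : Set E}
    (hW : W.Nonempty) : (Finset.univ.filter fun i ↦ W ⊆ A i).card ≤ m := by
  by_cases h : ∃ i₀, W ⊆ A i₀
  · obtain ⟨i₀, hi₀⟩ := h
    obtain ⟨w, hw⟩ := hW
    rw [← hm i₀]
    refine Finset.card_le_card fun i hi ↦ Finset.mem_filter.2 ⟨Finset.mem_univ _, ?_⟩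
    exact hdisj i i₀ ⟨w, (Finset.mem_filter.1 hi).2 hw, hi₀ hw⟩
  · push Not at h
    simp [h]

theorem sum_sep_inter_le (hdisj : ∀ i j, (A i ∩ A j).Nonempty → A i = A j)
    (hm : ∀ i, (Finset.univ.filter fun j ↦ A j = A i).card = m) (B W : Set E) :
    ∑ i, sep (A i ∩ B) W ≤ ∑ i, sep (A i) W + m * sep B W := by
  rw [← Finset.sum_filter_add_sum_filter_not Finset.univ (fun i ↦ W ⊆ A i)]
  have hin : ∑ i ∈ Finset.univ.filter (fun i ↦ W ⊆ A i), sep (A i ∩ B) W ≤ m * sep B W := by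
    refine (Finset.sum_le_sum fun i hi ↦
      sep_inter_le_right_of_subset (Finset.mem_filter.1 hi).2).trans ?_
    rw [Finset.sum_const, smul_eq_mul]
    rcases sep_eq_zero_or_eq_one B W with h | h
    · simp [h]
    · obtain ⟨⟨w, hw, _⟩, _⟩ := sep_eq_one_iff.1 h
      exact Nat.mul_le_mul_right _ (card_filter_subset_le hdisj hm ⟨w, hw⟩)
  have hout : ∑ i ∈ Finset.univ.filter (fun i ↦ ¬ W ⊆ A i), sep (A i ∩ B) W ≤
      ∑ i, sep (A i) W :=
    (Finset.sum_le_sum fun i hi ↦ sep_inter_le_left_of_not_subset (Finset.mem_filter.1 hi).2).trans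
      (Finset.sum_le_sum_of_subset (Finset.filter_subset _ _))
  omega

theorem le_sum_sep_of_inter_nonempty (hm : ∀ i, (Finset.univ.filter fun j ↦ A j = A i).card = m)
    {W : Set E} {k : ι} (hk : (W ∩ A k).Nonempty) (hout : (W ∩ (⋃ i, A i)ᶜ).Nonempty) :
    m ≤ ∑ i, sep (A i) W := by
  obtain ⟨z, hzW, hz⟩ := hout
  rw [← hm k, Finset.card_eq_sum_ones]
  refine (Finset.sum_le_sum fun i hi ↦ ?_).trans
    (Finset.sum_le_sum_of_subset (Finset.filter_subset _ _))
  rw [sep_eq_one_iff.2 ⟨(Finset.mem_filter.1 hi).2 ▸ hk,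
    z, hzW, fun hzA ↦ hz (Set.mem_iUnion.2 ⟨i, hzA⟩)⟩]

theorem sum_sep_inter_add_sep_union_le (hdisj : ∀ i j, (A i ∩ A j).Nonempty → A i = A j)
    (hm : ∀ i, (Finset.univ.filter fun j ↦ A j = A i).card = m) (B W : Set E) :
    ∑ i, sep (A i ∩ B) W + m * sep (B ∪ ⋃ i, A i) W ≤ ∑ i, sep (A i) W + m * sep B W := by
  rcases sep_eq_zero_or_eq_one (B ∪ ⋃ i, A i) W with h | h
  · simpa [h] using sum_sep_inter_le hdisj hm B W
  obtain ⟨⟨y, hyW, hy⟩, ⟨z, hzW, hz⟩⟩ := sep_eq_one_iff.1 h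
  have hzB : z ∉ B := fun hzB ↦ hz (Or.inl hzB)
  have hzA : ∀ i, z ∉ A i := fun i hzA ↦ hz (Or.inr (Set.mem_iUnion.2 ⟨i, hzA⟩))
  rw [h, mul_one]
  by_cases hWB : (W ∩ B).Nonempty
  · have hterm : ∑ i, sep (A i ∩ B) W ≤ ∑ i, sep (A i) W :=
      Finset.sum_le_sum fun i _ ↦ sep_inter_le_left_of_not_subset fun hW ↦ hzA i (hW hzW)
    rw [sep_eq_one_iff.2 ⟨hWB, z, hzW, hzB⟩]
    omega
  · have hzero : ∑ i, sep (A i ∩ B) W = 0 :=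
      Finset.sum_eq_zero fun i _ ↦ sep_eq_zero_of_inter_right hWB
    have hyA : y ∈ ⋃ i, A i := hy.resolve_left fun hyB ↦ hWB ⟨y, hyW, hyB⟩
    obtain ⟨k, hk⟩ := Set.mem_iUnion.1 hyA
    have hm_le := le_sum_sep_of_inter_nonempty hm ⟨y, hyW, hk⟩ ⟨z, hzW, fun hz' ↦ hz (Or.inr hz')⟩
    omega

end Separation

section Translates

variable {G E : Type*} [Group G] [MulAction G E]

theorem sep_smul_smul (k : G) (X W : Set E) : sep (k • X) (k • W) = sep X W := by
  unfold sep
  rw [← Set.smul_set_inter, ← Set.smul_set_compl, ← Set.smul_set_inter, Set.smul_set_nonempty,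
    Set.smul_set_nonempty]

theorem sum_sep_smul_left [Fintype G] (k : G) (X W : Set E) :
    ∑ g : G, sep (k • X) (g • W) = ∑ g : G, sep X (g • W) := by
  rw [← Equiv.sum_comp (Equiv.mulLeft k)]
  simp only [Equiv.coe_mulLeft, mul_smul, sep_smul_smul]

theorem card_mul_sum_sep_eq [Fintype G] (H : Subgroup G) [Fintype H] (X W : Set E) :
    Nat.card H * ∑ g : G, sep X (g • W) = ∑ g : G, ∑ k : H, sep ((k : G) • X) (g • W) := by
  rw [Finset.sum_comm]
  simp only [sum_sep_smul_left, Finset.sum_const, Finset.card_univ, smul_eq_mul,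
    Nat.card_eq_fintype_card]

variable {α : Set E}

theorem smul_eq_smul_of_inter_nonempty (hα : ∀ x : G, (α ∩ x • α).Nonempty → x • α = α)
    {g h : G} (hne : (g • α ∩ h • α).Nonempty) : g • α = h • α := by
  have hx : (α ∩ (g⁻¹ * h) • α).Nonempty := by
    have := hne.smul_set (a := g⁻¹)
    rwa [Set.smul_set_inter, inv_smul_smul, smul_smul] at this
  calc g • α = g • (g⁻¹ * h) • α := by rw [hα _ hx]
    _ = h • α := by rw [smul_smul, mul_inv_cancel_left]

theorem card_filter_smul_eq {Q : Subgroup G} [Fintype Q]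
    (hQ : MulAction.stabilizer G α ≤ Q) (i : Q) :
    (Finset.univ.filter fun k : Q ↦ (k : G) • α = (i : G) • α).card =
      Nat.card (MulAction.stabilizer G α) := by
  have hmem : ∀ k : G, (i : G)⁻¹ * k ∈ MulAction.stabilizer G α ↔ k • α = (i : G) • α := by
    intro k
    rw [MulAction.mem_stabilizer_iff, mul_smul, inv_smul_eq_iff]
  rw [← Fintype.card_subtype, ← Nat.card_eq_fintype_card]
  exact Nat.card_congr
    { toFun := fun k ↦ ⟨(i : G)⁻¹ * k, (hmem k).2 k.2⟩
      invFun := fun s ↦ ⟨⟨i * s, mul_mem i.2 (hQ s.2)⟩, (hmem _).1 (by simp)⟩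
      left_inv := fun k ↦ by ext; simp
      right_inv := fun s ↦ by ext; simp }

theorem smul_iUnion_smul_of_mem {Q : Subgroup G} {k : G} (hk : k ∈ Q) :
    k • ⋃ x ∈ Q, x • α = ⋃ x ∈ Q, x • α := by
  have hU : (⋃ x ∈ Q, x • α) = (Q : Set G) • α := Set.iUnion_smul_set (Q : Set G) α
  rw [hU, ← smul_assoc, smul_coe_set hk]

variable {β : Set E}

theorem sum_sep_smul_inter_add_sep_union_le [Finite G] {Q : Subgroup G} [Fintype Q]
    (hα : ∀ x : G, (α ∩ x • α).Nonempty → x • α = α)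
    (hαQ : MulAction.stabilizer G α ≤ Q) (hQβ : Q ≤ MulAction.stabilizer G β) (W : Set E) :
    (MulAction.stabilizer G α).index * ∑ k : Q, sep ((k : G) • (α ∩ β)) W +
        Q.index * ∑ k : Q, sep ((k : G) • (β ∪ ⋃ x ∈ Q, x • α)) W ≤
      (MulAction.stabilizer G α).index * ∑ k : Q, sep ((k : G) • α) W +
        Q.index * ∑ k : Q, sep ((k : G) • β) W := by
  have hβ (k : Q) : (k : G) • β = β := hQβ k.2
  have hU : (⋃ x ∈ Q, x • α) = ⋃ k : Q, (k : G) • α :=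
    (Set.iUnion_subtype (· ∈ Q) fun k ↦ (k : G) • α).symm
  have hunion (k : Q) : (k : G) • (β ∪ ⋃ x ∈ Q, x • α) = β ∪ ⋃ k : Q, (k : G) • α := by
    rw [Set.smul_set_union, hβ, smul_iUnion_smul_of_mem k.2, hU]
  simp only [Set.smul_set_inter, hβ, hunion, Finset.sum_const, Finset.card_univ, smul_eq_mul]
  have hcore := sum_sep_inter_add_sep_union_le (A := fun k : Q ↦ (k : G) • α)
    (fun _ _ ↦ smul_eq_smul_of_inter_nonempty hα) (card_filter_smul_eq hαQ) β W
  have hcard : (MulAction.stabilizer G α).index * Nat.card (MulAction.stabilizer G α) =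
      Q.index * Fintype.card Q := by
    rw [← Nat.card_eq_fintype_card, Subgroup.index_mul_card, Subgroup.index_mul_card]
  calc _ = (MulAction.stabilizer G α).index * (∑ k : Q, sep ((k : G) • α ∩ β) W +
          Nat.card (MulAction.stabilizer G α) * sep (β ∪ ⋃ k : Q, (k : G) • α) W) := by
        rw [mul_add, ← mul_assoc _ (Nat.card _), hcard, mul_assoc]
    _ ≤ (MulAction.stabilizer G α).index * (∑ k : Q, sep ((k : G) • α) W +
          Nat.card (MulAction.stabilizer G α) * sep β W) :=
        Nat.mul_le_mul_left _ hcore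
    _ = _ := by rw [mul_add, ← mul_assoc _ (Nat.card _), hcard, mul_assoc]

end Translates

theorem stmt_7_general {G E : Type*} [Group G] [Fintype G] [MulAction G E]
    (α β : Set E)
    (hedgeα : ∀ x : G, (α ∩ x • α).Nonempty → x • α = α)
    (P Q : Subgroup G)
    (hP : P = MulAction.stabilizer G α)
    (hQ : Q = MulAction.stabilizer G β)
    (hPQ : P ≤ Q)
    (p q : ℕ) (hp : p = P.index) (hq : q = Q.index)
    {J : Type*} [Fintype J] (Z : J → Set E)
    (norm : Set E → ℕ)
    (hnorm : ∀ X : Set E, norm X = ∑ j : J, ∑ g : G, sep X (g • Z j)) :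
    p * norm (α ∩ β) + q * norm (β ∪ ⋃ x ∈ Q, x • α) ≤
      p * norm α + q * norm β := by
  subst hP hp hq
  have havg (X : Set E) :
      Nat.card Q * norm X = ∑ j, ∑ g : G, ∑ k : Q, sep ((k : G) • X) (g • Z j) := by
    rw [hnorm, Finset.mul_sum]
    simp only [card_mul_sum_sep_eq]
  refine Nat.le_of_mul_le_mul_left ?_ (Nat.card_pos (α := Q))
  calc _ = ∑ j, ∑ g : G, _ := by
        simp only [mul_add, mul_left_comm _ (Subgroup.index _), havg, Finset.mul_sum,
          ← Finset.sum_add_distrib]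
    _ ≤ ∑ j, ∑ g : G, _ := Finset.sum_le_sum fun j _ ↦ Finset.sum_le_sum fun g _ ↦
        sum_sep_smul_inter_add_sep_union_le hedgeα hPQ hQ.le (g • Z j)
    _ = _ := by
        simp only [mul_add, mul_left_comm _ (Subgroup.index _), havg, Finset.mul_sum,
          ← Finset.sum_add_distrib]

/-- Lemma 7.9 (combinatorial content): in the Setup (Notation 7.1) with `G`
finite, `p = [G : P]`, `q = [G : Q]`, and `‖X‖ = Σ_j Σ_{g ∈ G} |X|*_{g • Z_j}`
for a finite family `(Z_j)`, we have `p‖α ∩ β‖ + q‖β ∪ Q•α‖ ≤ p‖α‖ + q‖β‖`. -/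
theorem stmt_7 {G E : Type*} [Group G] [Fintype G] [MulAction G E]
    (α β : Set E) (hα : α.Nonempty) (hβ : β.Nonempty)
    (hedgeα : ∀ x : G, (α ∩ x • α).Nonempty → x • α = α)
    (hedgeβ : ∀ x : G, (β ∩ x • β).Nonempty → x • β = β)
    (P Q : Subgroup G)
    (hP : P = MulAction.stabilizer G α)
    (hQ : Q = MulAction.stabilizer G β)
    (hαβ : (α ∩ β).Nonempty)
    (hPQ : P ≤ Q)
    (hsimple : ∀ g : G, (α ∩ g • β).Nonempty → g ∈ Q)
    (p q : ℕ) (hp : p = P.index) (hq : q = Q.index)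
    {J : Type*} [Fintype J] (Z : J → Set E)
    (norm : Set E → ℕ)
    (hnorm : ∀ X : Set E, norm X = ∑ j : J, ∑ g : G, sep X (g • Z j)) :
    p * norm (α ∩ β) + q * norm (β ∪ ⋃ x ∈ Q, x • α) ≤
      p * norm α + q * norm β :=
  stmt_7_general α β hedgeα P Q hP hQ hPQ p q hp hq Z norm hnorm
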